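/- Let P be the uniform distribution on [a,b] with a<b and let n ≥ 1. Among all sets of n points {c_1,...,c_n} ⊆ [a,b] with c_1 = a fixed, the minimal distortion error ∫_a^b min_j (t-c_j)^2 dP(t) equals (b-a)^2 / (3(2n-1)^2), and it is attained by the points c_j = a + 2(j-1)(b-a)/(2n-1) for 1 ≤ j ≤ n. -/
import Mathlib

open Finset intervalIntegral

private lemma cube_tangent {x s : ℝ} (hx : 0 ≤ x) (hs : 0 ≤ s) :
    3*s^2*x - 2*s^3 ≤ x^3 := by nlinarith [sq_nonneg (x - s), sq_nonneg x, sq_nonneg (x + s)]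

private lemma integral_sq_shift (y p q : ℝ) :
    ∫ t in p..q, (t - y)^2 = ((q - y)^3 - (p - y)^3)/3 := by
  have h := intervalIntegral.integral_comp_sub_right (a := p) (b := q) (fun t => t^2) y
  rw [h, integral_pow]
  norm_num

private noncomputable def Mfun (a b : ℝ) (n : ℕ) (Y : ℕ → ℝ) (j : ℕ) : ℝ :=
  if j = 0 then a else if j < n then (Y (j-1) + Y j)/2 else b

private lemma M_zero (a b : ℝ) (n : ℕ) (Y : ℕ → ℝ) : Mfun a b n Y 0 = a := rfl

private lemma M_last (a b : ℝ) (n : ℕ) (hn : 1 ≤ n) (Y : ℕ → ℝ) : Mfun a b n Y n = b := by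
  simp [Mfun]; omega

private lemma M_le (a b : ℝ) (n : ℕ) (Y : ℕ → ℝ) (hY : Monotone Y) (h0 : Y 0 = a) :
    ∀ j < n, Mfun a b n Y j ≤ Y j := by
  intro j hj
  rcases Nat.eq_zero_or_pos j with h | h
  · subst h; simp [Mfun, h0]
  · have h1 : Y (j-1) ≤ Y j := hY (by omega)
    simp only [Mfun, if_neg (by omega : ¬ j = 0), if_pos hj]
    linarith

private lemma le_M (a b : ℝ) (n : ℕ) (Y : ℕ → ℝ) (hY : Monotone Y) (hb : ∀ j, Y j ≤ b) :
    ∀ j < n, Y j ≤ Mfun a b n Y (j+1) := by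
  intro j hj
  by_cases h : j + 1 < n
  · have h1 : Y j ≤ Y (j+1) := hY (by omega)
    simp only [Mfun, if_neg (by omega : ¬ j + 1 = 0), if_pos h, Nat.add_sub_cancel]
    linarith
  · simp only [Mfun, if_neg (by omega : ¬ j + 1 = 0), if_neg h]
    exact hb j

private lemma sum_lb (a b : ℝ) (hab : a < b) (n : ℕ) (hn : 1 ≤ n)
    (A B : ℕ → ℝ) (hA : ∀ j < n, 0 ≤ A j) (hB : ∀ j < n, 0 ≤ B j) (hB0 : B 0 = 0)
    (hsum : ∑ j ∈ Finset.range n, (A j + B j) = b - a) :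
    (b - a)^3 / (3 * (2*(n:ℝ) - 1)^2) ≤ ∑ j ∈ Finset.range n, (A j ^3 + B j ^3)/3 := by
  obtain ⟨k, rfl⟩ : ∃ k, n = k + 1 := ⟨n - 1, by omega⟩
  have hk0 : (0:ℝ) ≤ (k:ℝ) := Nat.cast_nonneg k
  have hpos : (0:ℝ) < 2*((k:ℝ)+1) - 1 := by linarith
  set s : ℝ := (b - a)/(2*((k:ℝ)+1)-1) with hs_def
  have hs0 : 0 ≤ s := div_nonneg (by linarith) hpos.le
  have hseq : (2*((k:ℝ)+1)-1)*s = b - a := mul_div_cancel₀ _ hpos.ne'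
  have hA3 : ∑ j ∈ Finset.range (k+1), (3*s^2*A j - 2*s^3) ≤ ∑ j ∈ Finset.range (k+1), A j ^3 :=
    Finset.sum_le_sum fun j hj => cube_tangent (hA j (Finset.mem_range.mp hj)) hs0
  have hB3 : ∑ j ∈ Finset.range k, (3*s^2*B (j+1) - 2*s^3) ≤ ∑ j ∈ Finset.range k, B (j+1) ^3 :=
    Finset.sum_le_sum fun j hj =>
      cube_tangent (hB (j+1) (by have := Finset.mem_range.mp hj; omega)) hs0
  have eB : ∑ j ∈ Finset.range (k+1), B j ^3 = ∑ j ∈ Finset.range k, B (j+1) ^3 + B 0 ^3 :=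
    Finset.sum_range_succ' _ _
  have eB' : ∑ j ∈ Finset.range (k+1), B j = ∑ j ∈ Finset.range k, B (j+1) + B 0 :=
    Finset.sum_range_succ' _ _
  have e1 : ∑ j ∈ Finset.range (k+1), (3*s^2*A j - 2*s^3)
      = 3*s^2 * (∑ j ∈ Finset.range (k+1), A j) - ((k:ℝ)+1)*(2*s^3) := by
    rw [Finset.sum_sub_distrib, ← Finset.mul_sum, Finset.sum_const, Finset.card_range]
    ring
  have e2 : ∑ j ∈ Finset.range k, (3*s^2*B (j+1) - 2*s^3)
      = 3*s^2 * (∑ j ∈ Finset.range k, B (j+1)) - (k:ℝ)*(2*s^3) := by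
    rw [Finset.sum_sub_distrib, ← Finset.mul_sum, Finset.sum_const, Finset.card_range]
    ring
  have hsum2 : ∑ j ∈ Finset.range (k+1), A j + ∑ j ∈ Finset.range (k+1), B j = b - a := by
    rw [← Finset.sum_add_distrib]; exact hsum
  have etot : ∑ j ∈ Finset.range (k+1), (A j ^3 + B j ^3)/3
      = ((∑ j ∈ Finset.range (k+1), A j ^3) + ∑ j ∈ Finset.range (k+1), B j ^3)/3 := by
    rw [← Finset.sum_div, Finset.sum_add_distrib]
  have hgoal_eq : (b - a)^3 / (3 * (2*((k+1:ℕ):ℝ) - 1)^2) = (2*(k:ℝ)+1)*s^3/3 := by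
    rw [← hseq]; push_cast; field_simp; ring
  rw [hgoal_eq, etot]
  have hB00 : B 0 ^ 3 = 0 := by rw [hB0]; ring
  nlinarith [hA3, hB3, eB, eB', e1, e2, hsum2]

private lemma main_integral (a b : ℝ) (hab : a < b) (n : ℕ) (hn : 1 ≤ n)
    (Y : ℕ → ℝ) (hY : Monotone Y) (hmem : ∀ j, Y j ∈ Set.Icc a b) (h0 : Y 0 = a) :
    ∫ t in a..b, ⨅ j : Fin n, (t - Y j)^2
      = ∑ j ∈ Finset.range n,
          ((Mfun a b n Y (j+1) - Y j)^3 + (Y j - Mfun a b n Y j)^3)/3 := by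
  haveI : Nonempty (Fin n) := ⟨⟨0, hn⟩⟩
  set m : ℕ → ℝ := Mfun a b n Y with hm
  have hma : ∀ j, a ≤ Y j := fun j => (hmem j).1
  have hmb : ∀ j, Y j ≤ b := fun j => (hmem j).2
  have key1 : ∀ j < n, m j ≤ Y j := M_le a b n Y hY h0
  have key2 : ∀ j < n, Y j ≤ m (j+1) := le_M a b n Y hY hmb
  have hvor : ∀ j < n, ∀ t ∈ Set.Icc (m j) (m (j+1)), ∀ k : Fin n,
      (t - Y j)^2 ≤ (t - Y (k:ℕ))^2 := by
    intro j hj t ht k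
    obtain ⟨ht1, ht2⟩ := ht
    rcases lt_trichotomy (k:ℕ) j with hkj | hkj | hkj
    · have hj1 : 1 ≤ j := by omega
      have hYk : Y (k:ℕ) ≤ Y j := hY (le_of_lt hkj)
      have hYk' : Y (k:ℕ) ≤ Y (j-1) := hY (by omega)
      have hmj : m j = (Y (j-1) + Y j)/2 := by
        simp [hm, Mfun, if_neg (by omega : ¬ j = 0), if_pos hj]
      have h2t : Y j + Y (k:ℕ) ≤ 2*t := by rw [hmj] at ht1; linarith
      nlinarith [mul_nonneg (sub_nonneg.mpr hYk) (by linarith : (0:ℝ) ≤ 2*t - Y j - Y (k:ℕ))]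
    · rw [hkj]
    · have hkn : (k:ℕ) < n := k.2
      have hj1n : j + 1 < n := by omega
      have hYk : Y j ≤ Y (k:ℕ) := hY (le_of_lt hkj)
      have hYk' : Y (j+1) ≤ Y (k:ℕ) := hY (by omega)
      have hmj : m (j+1) = (Y j + Y (j+1))/2 := by
        simp only [hm, Mfun, if_neg (by omega : ¬ j + 1 = 0), if_pos hj1n, Nat.add_sub_cancel]
      have h2t : 2*t ≤ Y j + Y (k:ℕ) := by rw [hmj] at ht2; linarith
      nlinarith [mul_nonneg (sub_nonneg.mpr hYk) (by linarith : (0:ℝ) ≤ Y j + Y (k:ℕ) - 2*t)]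
  have hinf : ∀ j < n, ∀ t ∈ Set.Icc (m j) (m (j+1)),
      (⨅ k : Fin n, (t - Y (k:ℕ))^2) = (t - Y j)^2 := by
    intro j hj t ht
    apply le_antisymm
    · exact ciInf_le ⟨0, by rintro x ⟨k, rfl⟩; positivity⟩ (⟨j, hj⟩ : Fin n)
    · exact le_ciInf fun k => hvor j hj t ht k
  have hcont : Continuous fun t => ⨅ k : Fin n, (t - Y (k:ℕ))^2 := by
    have e : (fun t => ⨅ k : Fin n, (t - Y (k:ℕ))^2)
        = fun t => Finset.univ.inf' Finset.univ_nonempty (fun k : Fin n => (t - Y (k:ℕ))^2) := by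
      funext t; rw [Finset.inf'_univ_eq_ciInf]
    rw [e]
    exact Continuous.finset_inf'_apply _ fun i _ => by continuity
  have hmono_m : ∀ j < n, m j ≤ m (j+1) := fun j hj => (key1 j hj).trans (key2 j hj)
  have hint : ∀ j < n, IntervalIntegrable (fun t => ⨅ k : Fin n, (t - Y (k:ℕ))^2)
      MeasureTheory.volume (m j) (m (j+1)) := fun j hj => hcont.intervalIntegrable _ _
  have hsplit : ∑ j ∈ Finset.range n, ∫ t in (m j)..(m (j+1)), ⨅ k : Fin n, (t - Y (k:ℕ))^2
      = ∫ t in (m 0)..(m n), ⨅ k : Fin n, (t - Y (k:ℕ))^2 :=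
    intervalIntegral.sum_integral_adjacent_intervals hint
  have hm0 : m 0 = a := rfl
  have hmn : m n = b := M_last a b n hn Y
  rw [← hm0, ← hmn, ← hsplit]
  apply Finset.sum_congr rfl
  intro j hj
  have hj' : j < n := Finset.mem_range.mp hj
  have hcell : ∫ t in (m j)..(m (j+1)), ⨅ k : Fin n, (t - Y (k:ℕ))^2
      = ∫ t in (m j)..(m (j+1)), (t - Y j)^2 := by
    apply intervalIntegral.integral_congr
    intro t ht
    rw [Set.uIcc_of_le (hmono_m j hj')] at ht
    exact hinf j hj' t ht
  rw [hcell, integral_sq_shift]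
  ring

private lemma value_integral (a b : ℝ) (hab : a < b) (n : ℕ) (hn : 1 ≤ n) :
    ∫ t in a..b, ⨅ j : Fin n, (t - (a + 2*(j:ℝ)*(b-a)/(2*(n:ℝ)-1)))^2
      = (b-a)^3/(3*(2*(n:ℝ)-1)^2) := by
  have hn0 : (0:ℝ) ≤ (n:ℝ) - 1 := by
    have : (1:ℝ) ≤ (n:ℝ) := by exact_mod_cast hn
    linarith
  have hpos : (0:ℝ) < 2*(n:ℝ) - 1 := by linarith
  obtain ⟨s, hs_def⟩ : ∃ s : ℝ, s = (b - a)/(2*(n:ℝ)-1) := ⟨_, rfl⟩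
  have hs0 : 0 ≤ s := by rw [hs_def]; exact div_nonneg (by linarith) hpos.le
  have hb_eq : b = a + (2*(n:ℝ)-1)*s := by
    rw [hs_def, mul_div_cancel₀ _ hpos.ne']; ring
  set Y : ℕ → ℝ := fun j => a + 2*((min j (n-1) : ℕ):ℝ)*s with hY_def
  have hYval : ∀ j, j ≤ n - 1 → Y j = a + 2*(j:ℝ)*s := by
    intro j hj; simp only [hY_def, min_eq_left hj]
  have hcast : ((n-1:ℕ):ℝ) = (n:ℝ) - 1 := by
    rw [Nat.cast_sub hn]; norm_num
  have hY : Monotone Y := by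
    intro i j hij
    simp only [hY_def]
    have h1 : ((min i (n-1) : ℕ):ℝ) ≤ ((min j (n-1) : ℕ):ℝ) := by
      exact_mod_cast min_le_min hij le_rfl
    nlinarith
  have hmem : ∀ j, Y j ∈ Set.Icc a b := by
    intro j
    have h1 : (0:ℝ) ≤ ((min j (n-1) : ℕ):ℝ) := Nat.cast_nonneg _
    have h2 : ((min j (n-1) : ℕ):ℝ) ≤ (n:ℝ) - 1 := by
      rw [← hcast]; exact_mod_cast min_le_right _ _
    constructor
    · simp only [hY_def]; nlinarith
    · simp only [hY_def]; rw [hb_eq]; nlinarith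
  have h0 : Y 0 = a := by simp [hY_def]
  have hcongr : ∀ t : ℝ, (⨅ j : Fin n, (t - (a + 2*(j:ℝ)*(b-a)/(2*(n:ℝ)-1)))^2)
      = ⨅ j : Fin n, (t - Y (j:ℕ))^2 := by
    intro t
    apply iInf_congr
    intro j
    rw [hYval j (by omega)]
    rw [hs_def]; ring
  rw [intervalIntegral.integral_congr (fun t _ => hcongr t)]
  rw [main_integral a b hab n hn Y hY hmem h0]
  have hterm : ∀ j ∈ Finset.range n,
      ((Mfun a b n Y (j+1) - Y j)^3 + (Y j - Mfun a b n Y j)^3)/3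
      = if j = 0 then s^3/3 else 2*s^3/3 := by
    intro j hj
    have hjn : j < n := Finset.mem_range.mp hj
    have hYj : Y j = a + 2*(j:ℝ)*s := hYval j (by omega)
    have hA : Mfun a b n Y (j+1) - Y j = s := by
      by_cases h : j + 1 < n
      · have : Y (j+1) = a + 2*((j:ℝ)+1)*s := by
          rw [hYval (j+1) (by omega)]; push_cast; ring
        simp only [Mfun, if_neg (by omega : ¬ j + 1 = 0), if_pos h, Nat.add_sub_cancel]
        rw [this, hYj]; ring
      · have hjeq : j = n - 1 := by omega
        simp only [Mfun, if_neg (by omega : ¬ j + 1 = 0), if_neg h]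
        rw [hYj, hb_eq, hjeq, hcast]; ring
    by_cases hj0 : j = 0
    · subst hj0
      have hB0 : Y 0 - Mfun a b n Y 0 = 0 := by rw [h0]; simp [Mfun]
      rw [hA, hB0, if_pos rfl]; ring
    · have hj1 : 1 ≤ j := by omega
      have hB : Y j - Mfun a b n Y j = s := by
        have hYj1 : Y (j-1) = a + 2*((j:ℝ)-1)*s := by
          rw [hYval (j-1) (by omega)]
          rw [Nat.cast_sub hj1]; push_cast; ring
        simp only [Mfun, if_neg hj0, if_pos hjn]
        rw [hYj1, hYj]; ring
      rw [hA, hB, if_neg hj0]; ring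
  rw [Finset.sum_congr rfl hterm]
  obtain ⟨k, rfl⟩ : ∃ k, n = k + 1 := ⟨n - 1, by omega⟩
  rw [Finset.sum_range_succ']
  simp only [Nat.succ_ne_zero, if_false, if_pos rfl, Finset.sum_const, Finset.card_range,
    nsmul_eq_mul]
  rw [hb_eq]
  have hne : (2*(((k:ℝ)+1))-1) ≠ 0 := by
    have : (0:ℝ) ≤ (k:ℝ) := Nat.cast_nonneg k
    intro h; nlinarith
  push_cast
  field_simp
  ring

/-- Conditional quantization on `[a,b]` with the left endpoint `a` fixed:
the minimal distortion error over all `n`-point configurations containing `a`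
is `(b-a)^2 / (3(2n-1)^2)`, attained by `c j = a + 2 j (b-a)/(2n-1)`, `j = 0,…,n-1`. -/
theorem stmt1 (a b : ℝ) (hab : a < b) (n : ℕ) (hn : 1 ≤ n) :
    IsLeast
      {V : ℝ | ∃ c : Fin n → ℝ, (∀ j, c j ∈ Set.Icc a b) ∧ c ⟨0, by omega⟩ = a ∧
        V = (1 / (b - a)) * ∫ t in a..b, ⨅ j : Fin n, (t - c j)^2}
      ((b - a)^2 / (3 * (2 * (n : ℝ) - 1)^2)) ∧
    (1 / (b - a)) * (∫ t in a..b,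
        ⨅ j : Fin n, (t - (a + 2 * (j : ℝ) * (b - a) / (2 * (n : ℝ) - 1)))^2)
      = (b - a)^2 / (3 * (2 * (n : ℝ) - 1)^2) := by
  haveI : Nonempty (Fin n) := ⟨⟨0, hn⟩⟩
  have hba : (0:ℝ) < b - a := sub_pos.mpr hab
  have hn1 : (1:ℝ) ≤ (n:ℝ) := by exact_mod_cast hn
  have hpos : (0:ℝ) < 2*(n:ℝ) - 1 := by linarith
  have hval2 : (1 / (b - a)) * (∫ t in a..b,
      ⨅ j : Fin n, (t - (a + 2 * (j : ℝ) * (b - a) / (2 * (n : ℝ) - 1)))^2)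
      = (b - a)^2 / (3 * (2 * (n : ℝ) - 1)^2) := by
    rw [value_integral a b hab n hn]
    field_simp
  refine ⟨⟨⟨fun j => a + 2 * (j : ℝ) * (b - a) / (2 * (n : ℝ) - 1), ?_, ?_, hval2.symm⟩, ?_⟩,
    hval2⟩
  · intro j
    have hj : (j:ℝ) ≤ (n:ℝ) - 1 := by
      have := j.2
      have : ((j:ℕ):ℝ) ≤ ((n - 1 : ℕ):ℝ) := by exact_mod_cast Nat.le_sub_one_of_lt j.2
      rw [Nat.cast_sub hn] at this; push_cast at this ⊢; linarith
    have hj0 : (0:ℝ) ≤ (j:ℝ) := Nat.cast_nonneg _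
    show a + 2 * (j:ℝ) * (b - a) / (2 * (n:ℝ) - 1) ∈ Set.Icc a b
    constructor
    · have : (0:ℝ) ≤ 2 * (j:ℝ) * (b - a) / (2 * (n:ℝ) - 1) := by positivity
      linarith
    · rw [← sub_nonneg]
      have he : b - (a + 2*(j:ℝ)*(b-a)/(2*(n:ℝ)-1))
          = ((2*(n:ℝ)-1) - 2*(j:ℝ))*(b-a)/(2*(n:ℝ)-1) := by
        field_simp; ring
      rw [he]
      exact div_nonneg (mul_nonneg (by linarith) hba.le) hpos.le
  · simp
  · rintro V ⟨c, hc, hc0, rfl⟩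
    set σ : Equiv.Perm (Fin n) := Tuple.sort c with hσ
    set y : Fin n → ℝ := c ∘ σ with hy_def
    have hmono : Monotone y := Tuple.monotone_sort c
    have hperm : ∀ t : ℝ, (⨅ j : Fin n, (t - c j)^2) = ⨅ j : Fin n, (t - y j)^2 := by
      intro t
      simp only [iInf, hy_def]
      congr 1
      exact (Function.Surjective.range_comp σ.surjective fun j => (t - c j)^2).symm
    have hymem : ∀ j, y j ∈ Set.Icc a b := fun j => hc (σ j)
    have hy0 : y ⟨0, hn⟩ = a := by
      obtain ⟨k, hk⟩ : ∃ k, y k = a := ⟨σ.symm ⟨0, by omega⟩, by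
        simp only [hy_def, Function.comp_apply, Equiv.apply_symm_apply]; exact hc0⟩
      apply le_antisymm
      · rw [← hk]
        exact hmono (show (⟨0, hn⟩ : Fin n) ≤ k by simp [Fin.le_def])
      · exact (hymem _).1
    set Y : ℕ → ℝ := fun j => y ⟨min j (n-1), by omega⟩ with hY_def
    have hYfin : ∀ j : Fin n, Y (j:ℕ) = y j := by
      intro j
      have h1 : min (j:ℕ) (n-1) = (j:ℕ) := by have := j.2; omega
      simp only [hY_def]
      congr 1
      exact Fin.ext h1
    have hYmono : Monotone Y := by
      intro i j hij
      exact hmono (show (⟨min i (n-1), by omega⟩ : Fin n) ≤ ⟨min j (n-1), by omega⟩ by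
        simp only [Fin.mk_le_mk]; omega)
    have hYmem : ∀ j, Y j ∈ Set.Icc a b := fun j => hymem _
    have hY0 : Y 0 = a := by
      have h1 : (⟨min 0 (n-1), by omega⟩ : Fin n) = ⟨0, hn⟩ := Fin.mk_eq_mk.mpr (by omega)
      simp only [hY_def, h1, hy0]
    have hint_eq : ∫ t in a..b, ⨅ j : Fin n, (t - c j)^2
        = ∫ t in a..b, ⨅ j : Fin n, (t - Y (j:ℕ))^2 := by
      apply intervalIntegral.integral_congr
      intro t _
      show (⨅ j : Fin n, (t - c j)^2) = ⨅ j : Fin n, (t - Y (j:ℕ))^2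
      rw [hperm t]
      exact (iInf_congr fun j => by rw [hYfin j]).symm
    have h1 : (b-a)^3/(3*(2*(n:ℝ)-1)^2) ≤ ∫ t in a..b, ⨅ j : Fin n, (t - c j)^2 := by
      rw [hint_eq, main_integral a b hab n hn Y hYmono hYmem hY0]
      exact sum_lb a b hab n hn
        (fun j => Mfun a b n Y (j+1) - Y j) (fun j => Y j - Mfun a b n Y j)
        (fun j hj => sub_nonneg.mpr (le_M a b n Y hYmono (fun j => (hYmem j).2) j hj))
        (fun j hj => sub_nonneg.mpr (M_le a b n Y hYmono hY0 j hj))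
        (by simp [M_zero, hY0])
        (by
          rw [Finset.sum_congr rfl (fun j _ => by
            ring : ∀ j ∈ Finset.range n, (Mfun a b n Y (j+1) - Y j + (Y j - Mfun a b n Y j))
              = Mfun a b n Y (j+1) - Mfun a b n Y j)]
          rw [Finset.sum_range_sub (Mfun a b n Y), M_last a b n hn Y, M_zero])
    calc (b - a)^2 / (3 * (2 * (n:ℝ) - 1)^2)
        = (1/(b-a)) * ((b-a)^3/(3*(2*(n:ℝ)-1)^2)) := by field_simp
      _ ≤ (1/(b-a)) * ∫ t in a..b, ⨅ j : Fin n, (t - c j)^2 :=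
          mul_le_mul_of_nonneg_left h1 (by positivity)
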